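/- In an Ann-category 𝒜, for all objects A, B the following diagram commutes: g_0 ∘ (L̂^A ⊕ L̂^B) ∘ ℜ_{A,B,0} = L̂^{A⊕B} as morphisms (A ⊕ B) ⊗ 0 → 0, where g_0 = d_0 : 0 ⊕ 0 → 0. (This is axiom K12 of a ring category.) -/

import Mathlib

open CategoryTheory

universe v u

/-- An Ann-category: a groupoid with a symmetric monoidal (Picard) structure `⊕`
(`add`, constraints `aPlus`, `csym`, unit `zero` with `gl`, `dr`), a monoidal
structure `⊗` (`mul`, constraint `aMul`, unit `one` with `lu`, `ru`), and
distributivity isomorphisms `distL` (𝔏) and `distR` (ℜ) satisfying (Ann-1),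
(Ann-2) and (Ann-3). -/
structure AnnCat (C : Type u) [Groupoid.{v} C] where
  add : C → C → C
  addHom : ∀ {X₁ Y₁ X₂ Y₂ : C}, (X₁ ⟶ Y₁) → (X₂ ⟶ Y₂) → (add X₁ X₂ ⟶ add Y₁ Y₂)
  addHom_id : ∀ (X Y : C), addHom (𝟙 X) (𝟙 Y) = 𝟙 (add X Y)
  addHom_comp : ∀ {X₁ Y₁ Z₁ X₂ Y₂ Z₂ : C} (f₁ : X₁ ⟶ Y₁) (g₁ : Y₁ ⟶ Z₁)
    (f₂ : X₂ ⟶ Y₂) (g₂ : Y₂ ⟶ Z₂),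
    addHom (f₁ ≫ g₁) (f₂ ≫ g₂) = addHom f₁ f₂ ≫ addHom g₁ g₂
  zero : C
  aPlus : ∀ (X Y Z : C), add X (add Y Z) ≅ add (add X Y) Z
  aPlus_natural : ∀ {X X' Y Y' Z Z' : C} (f : X ⟶ X') (g : Y ⟶ Y') (h : Z ⟶ Z'),
    addHom f (addHom g h) ≫ (aPlus X' Y' Z').hom
      = (aPlus X Y Z).hom ≫ addHom (addHom f g) h
  csym : ∀ (X Y : C), add X Y ≅ add Y X
  csym_natural : ∀ {X X' Y Y' : C} (f : X ⟶ X') (g : Y ⟶ Y'),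
    addHom f g ≫ (csym X' Y').hom = (csym X Y).hom ≫ addHom g f
  csym_symm : ∀ (X Y : C), (csym X Y).hom ≫ (csym Y X).hom = 𝟙 (add X Y)
  gl : ∀ (X : C), add zero X ≅ X
  gl_natural : ∀ {X Y : C} (f : X ⟶ Y), addHom (𝟙 zero) f ≫ (gl Y).hom = (gl X).hom ≫ f
  dr : ∀ (X : C), add X zero ≅ X
  dr_natural : ∀ {X Y : C} (f : X ⟶ Y), addHom f (𝟙 zero) ≫ (dr Y).hom = (dr X).hom ≫ f
  add_pentagon : ∀ (W X Y Z : C),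
    addHom (𝟙 W) (aPlus X Y Z).hom ≫ (aPlus W (add X Y) Z).hom
        ≫ addHom (aPlus W X Y).hom (𝟙 Z)
      = (aPlus W X (add Y Z)).hom ≫ (aPlus (add W X) Y Z).hom
  add_triangle : ∀ (X Y : C),
    (aPlus X zero Y).hom ≫ addHom (dr X).hom (𝟙 Y) = addHom (𝟙 X) (gl Y).hom
  add_hexagon : ∀ (X Y Z : C),
    (aPlus X Y Z).hom ≫ (csym (add X Y) Z).hom ≫ (aPlus Z X Y).hom
      = addHom (𝟙 X) (csym Y Z).hom ≫ (aPlus X Z Y).hom ≫ addHom (csym X Z).hom (𝟙 Y)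
  add_inv : ∀ X : C, ∃ X' : C, Nonempty (add X X' ≅ zero)
  mul : C → C → C
  mulHom : ∀ {X₁ Y₁ X₂ Y₂ : C}, (X₁ ⟶ Y₁) → (X₂ ⟶ Y₂) → (mul X₁ X₂ ⟶ mul Y₁ Y₂)
  mulHom_id : ∀ (X Y : C), mulHom (𝟙 X) (𝟙 Y) = 𝟙 (mul X Y)
  mulHom_comp : ∀ {X₁ Y₁ Z₁ X₂ Y₂ Z₂ : C} (f₁ : X₁ ⟶ Y₁) (g₁ : Y₁ ⟶ Z₁)
    (f₂ : X₂ ⟶ Y₂) (g₂ : Y₂ ⟶ Z₂),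
    mulHom (f₁ ≫ g₁) (f₂ ≫ g₂) = mulHom f₁ f₂ ≫ mulHom g₁ g₂
  one : C
  aMul : ∀ (X Y Z : C), mul X (mul Y Z) ≅ mul (mul X Y) Z
  aMul_natural : ∀ {X X' Y Y' Z Z' : C} (f : X ⟶ X') (g : Y ⟶ Y') (h : Z ⟶ Z'),
    mulHom f (mulHom g h) ≫ (aMul X' Y' Z').hom
      = (aMul X Y Z).hom ≫ mulHom (mulHom f g) h
  lu : ∀ (X : C), mul one X ≅ X
  lu_natural : ∀ {X Y : C} (f : X ⟶ Y), mulHom (𝟙 one) f ≫ (lu Y).hom = (lu X).hom ≫ f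
  ru : ∀ (X : C), mul X one ≅ X
  ru_natural : ∀ {X Y : C} (f : X ⟶ Y), mulHom f (𝟙 one) ≫ (ru Y).hom = (ru X).hom ≫ f
  mul_pentagon : ∀ (W X Y Z : C),
    mulHom (𝟙 W) (aMul X Y Z).hom ≫ (aMul W (mul X Y) Z).hom
        ≫ mulHom (aMul W X Y).hom (𝟙 Z)
      = (aMul W X (mul Y Z)).hom ≫ (aMul (mul W X) Y Z).hom
  mul_triangle : ∀ (X Y : C),
    (aMul X one Y).hom ≫ mulHom (ru X).hom (𝟙 Y) = mulHom (𝟙 X) (lu Y).hom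
  distL : ∀ (A X Y : C), mul A (add X Y) ≅ add (mul A X) (mul A Y)
  distL_natural : ∀ {A A' X X' Y Y' : C} (f : A ⟶ A') (u : X ⟶ X') (w : Y ⟶ Y'),
    mulHom f (addHom u w) ≫ (distL A' X' Y').hom
      = (distL A X Y).hom ≫ addHom (mulHom f u) (mulHom f w)
  distR : ∀ (X Y A : C), mul (add X Y) A ≅ add (mul X A) (mul Y A)
  distR_natural : ∀ {X X' Y Y' A A' : C} (u : X ⟶ X') (w : Y ⟶ Y') (f : A ⟶ A'),
    mulHom (addHom u w) f ≫ (distR X' Y' A').hom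
      = (distR X Y A).hom ≫ addHom (mulHom u f) (mulHom w f)
  -- (Ann-1): (A ⊗ −, 𝔏) and (− ⊗ A, ℜ) are ⊕-functors compatible with a⁺ and c
  distL_aPlus : ∀ (A X Y Z : C),
    mulHom (𝟙 A) (aPlus X Y Z).hom ≫ (distL A (add X Y) Z).hom
        ≫ addHom (distL A X Y).hom (𝟙 (mul A Z))
      = (distL A X (add Y Z)).hom ≫ addHom (𝟙 (mul A X)) (distL A Y Z).hom
        ≫ (aPlus (mul A X) (mul A Y) (mul A Z)).hom
  distL_csym : ∀ (A X Y : C),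
    mulHom (𝟙 A) (csym X Y).hom ≫ (distL A Y X).hom
      = (distL A X Y).hom ≫ (csym (mul A X) (mul A Y)).hom
  distR_aPlus : ∀ (X Y Z A : C),
    mulHom (aPlus X Y Z).hom (𝟙 A) ≫ (distR (add X Y) Z A).hom
        ≫ addHom (distR X Y A).hom (𝟙 (mul Z A))
      = (distR X (add Y Z) A).hom ≫ addHom (𝟙 (mul X A)) (distR Y Z A).hom
        ≫ (aPlus (mul X A) (mul Y A) (mul Z A)).hom
  distR_csym : ∀ (X Y A : C),
    mulHom (csym X Y).hom (𝟙 A) ≫ (distR Y X A).hom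
      = (distR X Y A).hom ≫ (csym (mul X A) (mul Y A)).hom
  -- (Ann-2)
  ann11 : ∀ (A B X Y : C),
    mulHom (𝟙 A) (distL B X Y).hom ≫ (distL A (mul B X) (mul B Y)).hom
        ≫ addHom (aMul A B X).hom (aMul A B Y).hom
      = (aMul A B (add X Y)).hom ≫ (distL (mul A B) X Y).hom
  ann11' : ∀ (X Y B A : C),
    (aMul (add X Y) B A).hom ≫ mulHom (distR X Y B).hom (𝟙 A)
        ≫ (distR (mul X B) (mul Y B) A).hom
      = (distR X Y (mul B A)).hom ≫ addHom (aMul X B A).hom (aMul Y B A).hom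
  ann12 : ∀ (A X Y B : C),
    (aMul A (add X Y) B).hom ≫ mulHom (distL A X Y).hom (𝟙 B)
        ≫ (distR (mul A X) (mul A Y) B).hom
      = mulHom (𝟙 A) (distR X Y B).hom ≫ (distL A (mul X B) (mul Y B)).hom
        ≫ addHom (aMul A X B).hom (aMul A Y B).hom
  ann13 : ∀ (A B X Y : C),
    (distL (add A B) X Y).hom ≫ addHom (distR A B X).hom (distR A B Y).hom
        ≫ ((aPlus (add (mul A X) (mul B X)) (mul A Y) (mul B Y)).hom
          ≫ addHom (aPlus (mul A X) (mul B X) (mul A Y)).inv (𝟙 (mul B Y))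
          ≫ addHom (addHom (𝟙 (mul A X)) (csym (mul B X) (mul A Y)).hom) (𝟙 (mul B Y))
          ≫ addHom (aPlus (mul A X) (mul A Y) (mul B X)).hom (𝟙 (mul B Y))
          ≫ (aPlus (add (mul A X) (mul A Y)) (mul B X) (mul B Y)).inv)
      = (distR A B (add X Y)).hom ≫ addHom (distL A X Y).hom (distL B X Y).hom
  -- (Ann-3)
  ann3l : ∀ (X Y : C),
    (distL one X Y).hom ≫ addHom (lu X).hom (lu Y).hom = (lu (add X Y)).hom
  ann3r : ∀ (X Y : C),
    (distR X Y one).hom ≫ addHom (ru X).hom (ru Y).hom = (ru (add X Y)).hom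

namespace AnnCat

variable {C : Type u} [Groupoid.{v} C] (S : AnnCat C)

/-- The defining property of `L̂^A : A ⊗ 0 → 0`:
`g_{A⊗X} ∘ (L̂^A ⊕ id_{A⊗X}) ∘ 𝔏_{A,0,X} = id_A ⊗ g_X` for all `X`. -/
def IsLhat (A : C) (f : S.mul A S.zero ⟶ S.zero) : Prop :=
  ∀ X : C, (S.distL A S.zero X).hom ≫ S.addHom f (𝟙 (S.mul A X)) ≫ (S.gl (S.mul A X)).hom
    = S.mulHom (𝟙 A) (S.gl X).hom

/-- The defining property of `R̂^A : 0 ⊗ A → 0`: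
`g_{X⊗A} ∘ (R̂^A ⊕ id_{X⊗A}) ∘ ℜ_{0,X,A} = g_X ⊗ id_A` for all `X`. -/
def IsRhat (A : C) (f : S.mul S.zero A ⟶ S.zero) : Prop :=
  ∀ X : C, (S.distR S.zero X A).hom ≫ S.addHom f (𝟙 (S.mul X A)) ≫ (S.gl (S.mul X A)).hom
    = S.mulHom (S.gl X).hom (𝟙 A)

open MonoidalCategory

/-- Type synonym carrying the additive (`⊕`) monoidal structure of an Ann-category. -/
def Syn (_S : AnnCat C) : Type u := C

instance : Groupoid (Syn S) := inferInstanceAs (Groupoid C)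

/-- Pairing of isomorphisms under `⊕`. -/
@[simps] def addIso {W X Y Z : C} (i : W ≅ X) (j : Y ≅ Z) : S.add W Y ≅ S.add X Z where
  hom := S.addHom i.hom j.hom
  inv := S.addHom i.inv j.inv
  hom_inv_id := by rw [← S.addHom_comp]; simp [S.addHom_id]
  inv_hom_id := by rw [← S.addHom_comp]; simp [S.addHom_id]

/-- The symmetry as an isomorphism whose inverse is the swapped symmetry. -/
@[simps] def cIso (X Y : C) : S.add X Y ≅ S.add Y X where
  hom := (S.csym X Y).hom
  inv := (S.csym Y X).hom
  hom_inv_id := S.csym_symm X Y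
  inv_hom_id := S.csym_symm Y X

private lemma inv3 {D : Type*} [Category D] {X₁ X₂ X₃ X₄ Y : D}
    (a : X₁ ≅ X₂) (b : X₂ ≅ X₃) (c : X₃ ≅ X₄) (d : X₁ ≅ Y) (e : Y ≅ X₄)
    (h : a.hom ≫ b.hom ≫ c.hom = d.hom ≫ e.hom) :
    c.inv ≫ b.inv ≫ a.inv = e.inv ≫ d.inv := by
  have h' : (a ≪≫ b ≪≫ c) = (d ≪≫ e) := Iso.ext (by simpa using h)
  have := congrArg Iso.inv h'
  simpa [Iso.trans_inv] using this

private lemma inv33 {D : Type*} [Category D] {X₁ X₂ X₃ X₄ Y₁ Y₂ : D}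
    (a : X₁ ≅ X₂) (b : X₂ ≅ X₃) (c : X₃ ≅ X₄) (d : X₁ ≅ Y₁) (e : Y₁ ≅ Y₂) (f : Y₂ ≅ X₄)
    (h : a.hom ≫ b.hom ≫ c.hom = d.hom ≫ e.hom ≫ f.hom) :
    c.inv ≫ b.inv ≫ a.inv = f.inv ≫ e.inv ≫ d.inv := by
  have h' : (a ≪≫ b ≪≫ c) = (d ≪≫ e ≪≫ f) := Iso.ext (by simpa using h)
  have := congrArg Iso.inv h'
  simpa [Iso.trans_inv] using this

instance : MonoidalCategoryStruct (Syn S) where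
  tensorObj X Y := S.add X Y
  whiskerLeft X _ _ f := S.addHom (𝟙 X) f
  whiskerRight f Y := S.addHom f (𝟙 Y)
  tensorHom f g := S.addHom f g
  tensorUnit := S.zero
  associator X Y Z := (S.aPlus X Y Z).symm
  leftUnitor X := S.gl X
  rightUnitor X := S.dr X

instance : MonoidalCategory (Syn S) := .ofTensorHom
  (id_tensorHom_id := fun X Y => S.addHom_id X Y)
  (id_tensorHom := by intros; rfl)
  (tensorHom_id := by intros; rfl)
  (tensorHom_comp_tensorHom := fun f₁ f₂ g₁ g₂ => (S.addHom_comp f₁ g₁ f₂ g₂).symm)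
  (associator_naturality := by
    intro X₁ X₂ X₃ Y₁ Y₂ Y₃ f₁ f₂ f₃
    show S.addHom (S.addHom f₁ f₂) f₃ ≫ (S.aPlus Y₁ Y₂ Y₃).inv
      = (S.aPlus X₁ X₂ X₃).inv ≫ S.addHom f₁ (S.addHom f₂ f₃)
    rw [Iso.comp_inv_eq, Category.assoc, Iso.eq_inv_comp]; exact (S.aPlus_natural f₁ f₂ f₃).symm)
  (leftUnitor_naturality := fun f => S.gl_natural f)
  (rightUnitor_naturality := fun f => S.dr_natural f)
  (pentagon := by
    intro W X Y Z
    exact inv3 (S.addIso (Iso.refl W) (S.aPlus X Y Z)) (S.aPlus W (S.add X Y) Z)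
      (S.addIso (S.aPlus W X Y) (Iso.refl Z)) (S.aPlus W X (S.add Y Z))
      (S.aPlus (S.add W X) Y Z) (S.add_pentagon W X Y Z))
  (triangle := by
    intro X Y
    show (S.aPlus X S.zero Y).inv ≫ S.addHom (𝟙 X) (S.gl Y).hom
      = S.addHom (S.dr X).hom (𝟙 Y)
    rw [Iso.inv_comp_eq]
    exact (S.add_triangle X Y).symm)

instance synBraided : BraidedCategory (Syn S) where
  braiding X Y := S.cIso X Y
  braiding_naturality_right := by
    intro X Y Z f
    exact S.csym_natural (𝟙 X) f
  braiding_naturality_left := by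
    intro X Y f Z
    exact S.csym_natural f (𝟙 Z)
  hexagon_forward := by
    intro X Y Z
    exact inv33 (S.aPlus Y Z X) (S.cIso (S.add Y Z) X) (S.aPlus X Y Z)
      (S.addIso (Iso.refl Y) (S.cIso Z X)) (S.aPlus Y X Z)
      (S.addIso (S.cIso Y X) (Iso.refl Z)) (S.add_hexagon Y Z X)
  hexagon_reverse := fun X Y Z => S.add_hexagon X Y Z

instance : SymmetricCategory (Syn S) where
  toBraidedCategory := synBraided S
  symmetry X Y := S.csym_symm X Y

/-- `− ⊕ Z` is faithful (using a `⊕`-inverse of `Z`). -/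
lemma addHom_right_cancel {X Y : C} (Z : C) {f f' : X ⟶ Y}
    (h : S.addHom f (𝟙 Z) = S.addHom f' (𝟙 Z)) : f = f' := by
  obtain ⟨Z', ⟨e⟩⟩ := S.add_inv Z
  have key : ∀ g : X ⟶ Y, S.addHom g (𝟙 (S.add Z Z'))
      = (S.aPlus X Z Z').hom ≫ S.addHom (S.addHom g (𝟙 Z)) (𝟙 Z') ≫ (S.aPlus Y Z Z').inv := by
    intro g
    have := S.aPlus_natural g (𝟙 Z) (𝟙 Z')
    rw [S.addHom_id] at this
    rw [← Category.assoc, ← this, Category.assoc, Iso.hom_inv_id, Category.comp_id]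
  have h1 : S.addHom f (𝟙 (S.add Z Z')) = S.addHom f' (𝟙 (S.add Z Z')) := by
    rw [key, key, h]
  have key2 : ∀ g : X ⟶ Y, S.addHom (𝟙 X) e.hom ≫ S.addHom g (𝟙 S.zero)
      = S.addHom g (𝟙 (S.add Z Z')) ≫ S.addHom (𝟙 Y) e.hom := by
    intro g
    rw [← S.addHom_comp, ← S.addHom_comp, Category.id_comp, Category.comp_id,
      Category.comp_id, Category.id_comp]
  have h2 : S.addHom f (𝟙 S.zero) = S.addHom f' (𝟙 S.zero) := by
    have := (key2 f).trans (by rw [h1, ← key2 f'])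
    exact (cancel_epi (S.addHom (𝟙 X) e.hom)).1 this
  have key3 : ∀ g : X ⟶ Y, g = (S.dr X).inv ≫ S.addHom g (𝟙 S.zero) ≫ (S.dr Y).hom := by
    intro g
    rw [S.dr_natural g, Iso.inv_hom_id_assoc]
  rw [key3 f, key3 f', h2]

/-- Uniqueness of `L̂^A`. -/
lemma lhat_unique {A : C} {f f' : S.mul A S.zero ⟶ S.zero}
    (hf : S.IsLhat A f) (hf' : S.IsLhat A f') : f = f' := by
  apply S.addHom_right_cancel (S.mul A S.zero)
  have h := (hf S.zero).trans (hf' S.zero).symm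
  have h' := (cancel_epi (S.distL A S.zero S.zero).hom).1 h
  have h'' := (cancel_mono (S.gl (S.mul A S.zero)).hom).1 (by
    simpa [Category.assoc] using h')
  exact h''

/-- Naturality of the middle-four interchange `v` in its first two arguments. -/
lemma v_natural {P P' Q Q' : Syn S} (f : P ⟶ P') (g : Q ⟶ Q') (U V : Syn S) :
    ((α_ (P ⊗ Q) U V).inv
      ≫ (((α_ P Q U).hom : _ ⟶ _) ⊗ₘ (𝟙 V : V ⟶ V))
      ≫ (((𝟙 P : P ⟶ P) ⊗ₘ (β_ Q U).hom) ⊗ₘ (𝟙 V : V ⟶ V))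
      ≫ (((α_ P U Q).inv : _ ⟶ _) ⊗ₘ (𝟙 V : V ⟶ V))
      ≫ (α_ (P ⊗ U) Q V).hom)
      ≫ ((f ⊗ₘ (𝟙 U : U ⟶ U)) ⊗ₘ (g ⊗ₘ (𝟙 V : V ⟶ V)))
    = ((f ⊗ₘ g) ⊗ₘ (𝟙 (U ⊗ V) : U ⊗ V ⟶ U ⊗ V))
      ≫ ((α_ (P' ⊗ Q') U V).inv
      ≫ (((α_ P' Q' U).hom : _ ⟶ _) ⊗ₘ (𝟙 V : V ⟶ V))
      ≫ (((𝟙 P' : P' ⟶ P') ⊗ₘ (β_ Q' U).hom) ⊗ₘ (𝟙 V : V ⟶ V))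
      ≫ (((α_ P' U Q').inv : _ ⟶ _) ⊗ₘ (𝟙 V : V ⟶ V))
      ≫ (α_ (P' ⊗ U) Q' V).hom) := by
  have hμ : ∀ (P Q : Syn S), (α_ (P ⊗ Q) U V).inv
      ≫ (((α_ P Q U).hom : _ ⟶ _) ⊗ₘ (𝟙 V : V ⟶ V))
      ≫ (((𝟙 P : P ⟶ P) ⊗ₘ (β_ Q U).hom) ⊗ₘ (𝟙 V : V ⟶ V))
      ≫ (((α_ P U Q).inv : _ ⟶ _) ⊗ₘ (𝟙 V : V ⟶ V))
      ≫ (α_ (P ⊗ U) Q V).hom = tensorμ P Q U V := by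
    intro P Q
    simp [tensorμ, MonoidalCategory.tensorHom_def]
  rw [hμ, hμ]
  rw [show ((f ⊗ₘ g) ⊗ₘ (𝟙 (U ⊗ V) : U ⊗ V ⟶ U ⊗ V))
      = ((f ⊗ₘ g) ⊗ₘ ((𝟙 U : U ⟶ U) ⊗ₘ (𝟙 V : V ⟶ V))) by rw [id_tensorHom_id]]
  exact (tensorμ_natural f g (𝟙 U) (𝟙 V)).symm

/-- The coherence identity `v₀ ≫ (g_U ⊕ g_V) = (g_0 ⊕ 𝟙) ≫ g_{U⊕V}`. -/
lemma v_zero_coherence (U V : Syn S) :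
    ((α_ (𝟙_ (Syn S) ⊗ 𝟙_ (Syn S)) U V).inv
      ≫ (((α_ (𝟙_ (Syn S)) (𝟙_ (Syn S)) U).hom : _ ⟶ _) ⊗ₘ (𝟙 V : V ⟶ V))
      ≫ (((𝟙 (𝟙_ (Syn S)) : _ ⟶ _) ⊗ₘ (β_ (𝟙_ (Syn S)) U).hom) ⊗ₘ (𝟙 V : V ⟶ V))
      ≫ (((α_ (𝟙_ (Syn S)) U (𝟙_ (Syn S))).inv : _ ⟶ _) ⊗ₘ (𝟙 V : V ⟶ V))
      ≫ (α_ ((𝟙_ (Syn S)) ⊗ U) (𝟙_ (Syn S)) V).hom)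
      ≫ ((λ_ U).hom ⊗ₘ (λ_ V).hom)
    = ((λ_ (𝟙_ (Syn S))).hom ⊗ₘ (𝟙 (U ⊗ V) : U ⊗ V ⟶ U ⊗ V)) ≫ (λ_ (U ⊗ V)).hom := by
  rw [braiding_tensorUnit_left]
  monoidal

/-- The main diagram chase: `ℜ ≫ (L̂^A ⊕ L̂^B) ≫ g₀` satisfies the defining
property of `L̂^{A⊕B}`. -/
lemma isLhat_comp (A B : C)
    (LA : S.mul A S.zero ≅ S.zero) (hLA : S.IsLhat A LA.hom)
    (LB : S.mul B S.zero ≅ S.zero) (hLB : S.IsLhat B LB.hom) :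
    S.IsLhat (S.add A B)
      ((S.distR A B S.zero).hom ≫ S.addHom LA.hom LB.hom ≫ (S.gl S.zero).hom) := by
  intro X
  apply (cancel_mono (S.distR A B X).hom).1
  simp only [Category.assoc]
  have hR := S.distR_natural (𝟙 A) (𝟙 B) (S.gl X).hom
  rw [S.addHom_id] at hR
  rw [hR, ← hLA X, ← hLB X]
  conv_rhs => rw [S.addHom_comp, S.addHom_comp]
  have hann' := congrArg (fun t => t ≫ S.addHom (S.addHom LA.hom (𝟙 (S.mul A X)))
      (S.addHom LB.hom (𝟙 (S.mul B X)))
    ≫ S.addHom (S.gl (S.mul A X)).hom (S.gl (S.mul B X)).hom) (S.ann13 A B S.zero X)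
  simp only [Category.assoc] at hann'
  rw [← hann']
  rw [cancel_epi (S.distL (S.add A B) S.zero X).hom]
  have hv : ((S.aPlus (S.add (S.mul A S.zero) (S.mul B S.zero)) (S.mul A X) (S.mul B X)).hom
        ≫ S.addHom (S.aPlus (S.mul A S.zero) (S.mul B S.zero) (S.mul A X)).inv (𝟙 (S.mul B X))
        ≫ S.addHom (S.addHom (𝟙 (S.mul A S.zero)) (S.csym (S.mul B S.zero) (S.mul A X)).hom)
            (𝟙 (S.mul B X))
        ≫ S.addHom (S.aPlus (S.mul A S.zero) (S.mul A X) (S.mul B S.zero)).hom (𝟙 (S.mul B X))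
        ≫ (S.aPlus (S.add (S.mul A S.zero) (S.mul A X)) (S.mul B S.zero) (S.mul B X)).inv)
        ≫ S.addHom (S.addHom LA.hom (𝟙 (S.mul A X))) (S.addHom LB.hom (𝟙 (S.mul B X)))
      = S.addHom (S.addHom LA.hom LB.hom) (𝟙 (S.add (S.mul A X) (S.mul B X)))
        ≫ ((S.aPlus (S.add S.zero S.zero) (S.mul A X) (S.mul B X)).hom
        ≫ S.addHom (S.aPlus S.zero S.zero (S.mul A X)).inv (𝟙 (S.mul B X))
        ≫ S.addHom (S.addHom (𝟙 S.zero) (S.csym S.zero (S.mul A X)).hom) (𝟙 (S.mul B X))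
        ≫ S.addHom (S.aPlus S.zero (S.mul A X) S.zero).hom (𝟙 (S.mul B X))
        ≫ (S.aPlus (S.add S.zero (S.mul A X)) S.zero (S.mul B X)).inv) :=
    S.v_natural LA.hom LB.hom (S.mul A X) (S.mul B X)
  have hC2 : ((S.aPlus (S.add S.zero S.zero) (S.mul A X) (S.mul B X)).hom
        ≫ S.addHom (S.aPlus S.zero S.zero (S.mul A X)).inv (𝟙 (S.mul B X))
        ≫ S.addHom (S.addHom (𝟙 S.zero) (S.csym S.zero (S.mul A X)).hom) (𝟙 (S.mul B X))
        ≫ S.addHom (S.aPlus S.zero (S.mul A X) S.zero).hom (𝟙 (S.mul B X))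
        ≫ (S.aPlus (S.add S.zero (S.mul A X)) S.zero (S.mul B X)).inv)
        ≫ S.addHom (S.gl (S.mul A X)).hom (S.gl (S.mul B X)).hom
      = S.addHom (S.gl S.zero).hom (𝟙 (S.add (S.mul A X) (S.mul B X)))
        ≫ (S.gl (S.add (S.mul A X) (S.mul B X))).hom :=
    S.v_zero_coherence (S.mul A X) (S.mul B X)
  have hvc := congrArg (· ≫ S.addHom (S.gl (S.mul A X)).hom (S.gl (S.mul B X)).hom) hv
  simp only [Category.assoc] at hvc hC2
  rw [hvc, hC2]
  rw [← S.gl_natural (S.distR A B X).hom]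
  have hms : S.addHom ((S.distR A B S.zero).hom ≫ S.addHom LA.hom LB.hom ≫ (S.gl S.zero).hom)
        (𝟙 (S.mul (S.add A B) X)) ≫ S.addHom (𝟙 S.zero) (S.distR A B X).hom
      = S.addHom (S.distR A B S.zero).hom (S.distR A B X).hom
        ≫ S.addHom (S.addHom LA.hom LB.hom) (𝟙 (S.add (S.mul A X) (S.mul B X)))
        ≫ S.addHom (S.gl S.zero).hom (𝟙 (S.add (S.mul A X) (S.mul B X))) := by
    simp only [← S.addHom_comp, Category.comp_id, Category.id_comp]
  have hms' := congrArg (· ≫ (S.gl (S.add (S.mul A X) (S.mul B X))).hom) hms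
  simp only [Category.assoc] at hms'
  rw [hms']

end AnnCat

/-- `g_0 ∘ (L̂^A ⊕ L̂^B) ∘ ℜ_{A,B,0} = L̂^{A⊕B}` (axiom K12). -/
theorem ann_Lhat_add {C : Type u} [Groupoid.{v} C] (S : AnnCat C) (A B : C)
    (LA : S.mul A S.zero ≅ S.zero) (hLA : S.IsLhat A LA.hom)
    (LB : S.mul B S.zero ≅ S.zero) (hLB : S.IsLhat B LB.hom)
    (LAB : S.mul (S.add A B) S.zero ≅ S.zero) (hLAB : S.IsLhat (S.add A B) LAB.hom) :
    (S.distR A B S.zero).hom ≫ S.addHom LA.hom LB.hom ≫ (S.gl S.zero).hom = LAB.hom :=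
  AnnCat.lhat_unique S (AnnCat.isLhat_comp S A B LA hLA LB hLB) hLAB
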